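/- Let μ_d^β denote the Gaussian measure N(0, β²I) on ℝ^d for β > 0 and σ the ReLU. For every v, x ∈ ℝ^d, ∫_{ℝ^d} (wᵀv) σ(wᵀx) dμ_d^β(w) = (β²/2) vᵀx. -/

import Mathlib

/-!
Since `σ(t) - σ(-t) = t` and both factors of the integrand are odd in `w`, averaging the
integrand with its reflection under the symmetry `w ↦ -w` of the Gaussian law gives
`∫ (wᵀv) σ(wᵀx) = ½ ∫ (wᵀv)(wᵀx)`. The coordinates of `w` are independent and centred with
variance `β²`, so the last integral is `β² vᵀx`.
-/

open MeasureTheory ProbabilityTheory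

section OddIntegrand

variable {E : Type*} [MeasurableSpace E] [AddGroup E] [MeasurableNeg E]
  {μ : Measure E} [μ.IsNegInvariant]

theorem integral_mul_max_zero_of_odd {a b : E → ℝ} (ha : Measurable a) (hb : Measurable b)
    (ha_odd : ∀ w, a (-w) = -a w) (hb_odd : ∀ w, b (-w) = -b w)
    (hab : Integrable (fun w => a w * b w) μ) :
    ∫ w, a w * max (b w) 0 ∂μ = (∫ w, a w * b w ∂μ) / 2 := by
  set f := fun w => a w * max (b w) 0
  have hf : Integrable f μ := by
    refine hab.mono (by fun_prop) (.of_forall fun w => ?_)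
    simp only [f, norm_mul, Real.norm_eq_abs, abs_of_nonneg (le_max_right (b w) 0)]
    gcongr
    exact max_le (le_abs_self _) (abs_nonneg _)
  have hsum : ∀ w, f (-w) + f w = a w * b w := fun w => by
    simp only [f, ha_odd, hb_odd]
    linear_combination a w * max_zero_sub_max_neg_zero_eq_self (b w)
  have hreflect := integral_add hf.comp_neg hf
  rw [integral_neg_eq_self f μ] at hreflect
  simp only [hsum] at hreflect
  linarith

end OddIntegrand

section ProductMeasure

variable {ι : Type*} [Fintype ι] {μ : Measure ℝ} [IsProbabilityMeasure μ]

theorem memLp_eval_pi {p : ENNReal} (hμ : MemLp id p μ) (i : ι) :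
    MemLp (fun w : ι → ℝ => w i) p (Measure.pi fun _ => μ) :=
  hμ.comp_measurePreserving (measurePreserving_eval _ i)

theorem memLp_sum_eval_mul_pi (hμ2 : MemLp id 2 μ) (v : ι → ℝ) :
    MemLp (fun w : ι → ℝ => ∑ i, w i * v i) 2 (Measure.pi fun _ => μ) :=
  memLp_finsetSum _ fun i _ => (memLp_eval_pi hμ2 i).mul_const (v i)

theorem integral_eval_mul_eval_pi [DecidableEq ι] (hμ : ∫ x, x ∂μ = 0) (i j : ι) :
    ∫ w, w i * w j ∂Measure.pi (fun _ => μ) = if i = j then ∫ x, x ^ 2 ∂μ else 0 := by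
  split_ifs with hij
  · subst hij
    simp_rw [← sq]
    exact integral_comp_eval (μ := fun _ : ι => μ) (f := fun x : ℝ => x ^ 2) (by fun_prop)
  · have hindep := (iIndepFun_pi (μ := fun _ : ι => μ) (X := fun _ x => x)
      fun _ => aemeasurable_id).indepFun hij
    rw [hindep.integral_fun_mul_eq_mul_integral
      (measurable_pi_apply i).aestronglyMeasurable (measurable_pi_apply j).aestronglyMeasurable]
    simp [integral_eval, hμ]

theorem integral_sum_mul_sum_pi (hμ : ∫ x, x ∂μ = 0) (hμ2 : MemLp id 2 μ) (v x : ι → ℝ) :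
    ∫ w, (∑ i, w i * v i) * (∑ j, w j * x j) ∂Measure.pi (fun _ => μ)
      = (∫ t, t ^ 2 ∂μ) * ∑ i, v i * x i := by
  classical
  have hint : ∀ i j, Integrable (fun w : ι → ℝ => v i * x j * (w i * w j))
      (Measure.pi fun _ => μ) := fun i j =>
    ((memLp_eval_pi hμ2 i).integrable_mul (memLp_eval_pi hμ2 j)).const_mul _
  calc ∫ w, (∑ i, w i * v i) * (∑ j, w j * x j) ∂Measure.pi (fun _ => μ)
      = ∫ w, ∑ i, ∑ j, v i * x j * (w i * w j) ∂Measure.pi (fun _ => μ) := by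
        congr with w
        rw [Finset.sum_mul_sum]
        exact Finset.sum_congr rfl fun i _ => Finset.sum_congr rfl fun j _ => by ring
    _ = ∑ i, ∑ j, v i * x j * ∫ w, w i * w j ∂Measure.pi (fun _ => μ) := by
        rw [integral_finsetSum _ fun i _ => integrable_finsetSum _ fun j _ => hint i j]
        refine Finset.sum_congr rfl fun i _ => ?_
        rw [integral_finsetSum _ fun j _ => hint i j]
        simp_rw [integral_const_mul]
    _ = (∫ t, t ^ 2 ∂μ) * ∑ i, v i * x i := by
        simp [integral_eval_mul_eval_pi hμ, Finset.sum_mul, mul_comm]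

end ProductMeasure

instance isNegInvariant_gaussianReal_zero (v : NNReal) : (gaussianReal 0 v).IsNegInvariant :=
  ⟨by simpa [Measure.neg] using gaussianReal_map_neg (μ := 0) (v := v)⟩

theorem integral_sq_gaussianReal_zero (v : NNReal) : ∫ x, x ^ 2 ∂gaussianReal 0 v = v := by
  rw [← variance_of_integral_eq_zero aemeasurable_id' integral_id_gaussianReal,
    variance_fun_id_gaussianReal]

theorem stmt_1_general (d : ℕ) (β : ℝ) (v x : Fin d → ℝ) :
    ∫ w : Fin d → ℝ, (∑ i, w i * v i) * max (∑ i, w i * x i) 0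
      ∂(Measure.pi fun _ : Fin d => gaussianReal 0 ⟨β ^ 2, sq_nonneg β⟩)
    = (β ^ 2 / 2) * ∑ i, v i * x i := by
  -- `⟨β ^ 2, _⟩` has type `{r : ℝ // 0 ≤ r}` rather than `NNReal`, which blocks instance search
  set V : NNReal := ⟨β ^ 2, sq_nonneg β⟩
  have hμ2 : MemLp id 2 (gaussianReal 0 V) := memLp_id_gaussianReal 2
  rw [integral_mul_max_zero_of_odd (by fun_prop) (by fun_prop)
      (fun w => by simp [Finset.sum_neg_distrib]) (fun w => by simp [Finset.sum_neg_distrib])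
      ((memLp_sum_eval_mul_pi hμ2 v).integrable_mul (memLp_sum_eval_mul_pi hμ2 x)),
    integral_sum_mul_sum_pi integral_id_gaussianReal hμ2, integral_sq_gaussianReal_zero,
    show (V : ℝ) = β ^ 2 from rfl]
  ring

/-- For the Gaussian measure N(0, β²I) on ℝ^d and ReLU σ:
    ∫ (wᵀv)σ(wᵀx) dμ_d^β(w) = (β²/2) vᵀx. -/
theorem stmt_1 (d : ℕ) (β : ℝ) (hβ : 0 < β) (v x : Fin d → ℝ) :
    ∫ w : Fin d → ℝ, (∑ i, w i * v i) * max (∑ i, w i * x i) 0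
      ∂(Measure.pi fun _ : Fin d => gaussianReal 0 ⟨β ^ 2, sq_nonneg β⟩)
    = (β ^ 2 / 2) * ∑ i, v i * x i :=
  stmt_1_general d β v x
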